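/- For every integer n ≥ 1, the set PC_n of all automorphisms α of the free group F_n for which there exist a permutation π of {1, …, n} and words w_1, …, w_n ∈ F_n with α(x_i) = w_i⁻¹ x_{π(i)} w_i for all i (the permutation-conjugacy automorphisms), is a subgroup of Aut(F_n), and this subgroup equals the subgroup of Aut(F_n) generated by {σ_1, …, σ_{n−1}, ρ_1, …, ρ_{n−1}}. -/

import Mathlib

namespace LoopBraidGroups

/-- The `i`-th generator `x_i` of the free group of rank `n`
(with junk value `1` when `i ≥ n`); indices are `0`-based. -/
def xg (n i : ℕ) : FreeGroup (Fin n) :=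
  if h : i < n then FreeGroup.of (⟨i, h⟩ : Fin n) else 1

/-- `IsSigma n i s` : `s` is the automorphism `σ_i` of the free group of rank `n`,
sending `x_i ↦ x_{i+1}`, `x_{i+1} ↦ x_{i+1}⁻¹ x_i x_{i+1}` and fixing the
other generators. -/
def IsSigma (n i : ℕ) (s : MulAut (FreeGroup (Fin n))) : Prop :=
  s (xg n i) = xg n (i + 1) ∧
    s (xg n (i + 1)) = (xg n (i + 1))⁻¹ * xg n i * xg n (i + 1) ∧
    ∀ j, j < n → j ≠ i → j ≠ i + 1 → s (xg n j) = xg n j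

/-- `IsRho n i r` : `r` is the automorphism `ρ_i`, exchanging `x_i` and `x_{i+1}`
and fixing the other generators. -/
def IsRho (n i : ℕ) (r : MulAut (FreeGroup (Fin n))) : Prop :=
  r (xg n i) = xg n (i + 1) ∧ r (xg n (i + 1)) = xg n i ∧
    ∀ j, j < n → j ≠ i → j ≠ i + 1 → r (xg n j) = xg n j

/-- The set `PC_n` of permutation-conjugacy automorphisms `α` of the free group of
rank `n`: those with `α(x_i) = w_i⁻¹ x_{π(i)} w_i` for some permutation `π` and
words `w_i`. -/
def PCSet (n : ℕ) : Set (MulAut (FreeGroup (Fin n))) :=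
  {α | ∃ (π : Equiv.Perm (Fin n)) (w : Fin n → FreeGroup (Fin n)),
      ∀ i : Fin n, α (FreeGroup.of i) = (w i)⁻¹ * FreeGroup.of (π i) * w i}

end LoopBraidGroups

/-!
Write `α ∈ PC_n` as `permAut π * β` with `β` basis-conjugating, `β x_i = w_i⁻¹ x_i w_i`.
The `ρ_i` give every permutation automorphism, since adjacent transpositions generate `S_n`, and
`ρ_0 σ_0` is the elementary conjugation `x_1 ↦ x_0⁻¹ x_1 x_0`, whose conjugates by permutation
automorphisms are all the `x_k ↦ x_i⁻¹ x_k x_i`. These generate every basis-conjugating `β`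
(McCool), by descent on `∑ |w_i|`: if some `w_i` starts with `x_i^{±1}`, that letter can be
dropped; if some `w_k` ends in `x_i^{±1} w_i`, an elementary conjugation shortens `w_k`.
Otherwise Nielsen cancellation shows that the image under `β` of a reduced word ending in a
letter `l` ends in `l w_l`, so `x_j` is in the image of `β` only if `w_j = 1`.
-/

namespace List

variable {γ : Type*}

theorem exists_eq_append_cons_of_not_prefix :
    ∀ {x y : List γ}, ¬ x <+: y → ¬ y <+: x →
      ∃ c a b r s, a ≠ b ∧ x = c ++ a :: r ∧ y = c ++ b :: s
  | [], _, hxy, _ => absurd nil_prefix hxy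
  | _ :: _, [], _, hyx => absurd nil_prefix hyx
  | a :: x, b :: y, hxy, hyx => by
    by_cases hab : a = b
    · subst hab
      obtain ⟨c, a', b', r, s, hne, rfl, rfl⟩ :=
        exists_eq_append_cons_of_not_prefix (x := x) (y := y) (by simpa using hxy)
          (by simpa using hyx)
      exact ⟨a :: c, a', b', r, s, hne, rfl, rfl⟩
    · exact ⟨[], a, b, x, y, hab, rfl, rfl⟩

theorem exists_eq_append_cons_of_not_suffix {x y : List γ} (hxy : ¬ x <:+ y) (hyx : ¬ y <:+ x) :
    ∃ c a b r s, a ≠ b ∧ x = r ++ a :: c ∧ y = s ++ b :: c := by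
  rw [← reverse_prefix] at hxy hyx
  obtain ⟨c, a, b, r, s, hab, hx, hy⟩ := exists_eq_append_cons_of_not_prefix hxy hyx
  refine ⟨c.reverse, a, b, r.reverse, s.reverse, hab, ?_, ?_⟩
  · simpa using congrArg reverse hx
  · simpa using congrArg reverse hy

end List

namespace Equiv.Perm

theorem exists_apply_eq_apply_eq {α : Type*} [DecidableEq α] {a b c d : α} (hab : a ≠ b)
    (hcd : c ≠ d) : ∃ π : Perm α, π a = c ∧ π b = d := by
  have had : a ≠ swap a c d := fun h => hcd <| by
    rw [eq_comm, swap_apply_eq_iff, swap_apply_left] at h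
    exact h.symm
  exact ⟨swap a c * swap b (swap a c d), by simp [swap_apply_of_ne_of_ne hab had], by simp⟩

end Equiv.Perm

namespace FreeGroup

variable {α : Type*}

theorem mk_singleton_false (a : α) : mk [(a, false)] = (of a)⁻¹ := by
  simp [of, inv_mk, invRev]

@[simp] theorem invRev_append_singleton (L : List (α × Bool)) (b : α × Bool) :
    invRev (L ++ [b]) = (b.1, !b.2) :: invRev L := by
  simp [invRev]

theorem mulEquiv_ext {G : Type*} [Group G] {f g : FreeGroup α ≃* G}
    (h : ∀ a, f (of a) = g (of a)) : f = g :=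
  MulEquiv.toMonoidHom_injective (ext_hom _ _ h)

variable [DecidableEq α]

theorem IsReduced.invRev {L : List (α × Bool)} (h : IsReduced L) : IsReduced (invRev L) := by
  rw [← h.reduce_eq, ← toWord_mk, ← toWord_inv]
  exact isReduced_toWord

theorem IsReduced.toWord_mk {L : List (α × Bool)} (h : IsReduced L) : (mk L).toWord = L := by
  rw [FreeGroup.toWord_mk, h.reduce_eq]

/-- `p` and `q` are `u` and `v` stripped of their longest common suffix: since neither of `u`, `v`
is a suffix of the other, the last letters of `p` and `q` exist and differ, so the cancellation in
`u v⁻¹` stops there. -/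
theorem exists_toWord_mk_append_invRev_append {A u v B : List (α × Bool)}
    (hAu : IsReduced (A ++ u)) (hvB : IsReduced (invRev v ++ B))
    (huv : ¬ u <:+ v) (hvu : ¬ v <:+ u) :
    ∃ p q, q ≠ [] ∧ q <+: v ∧ (mk (A ++ u ++ invRev v ++ B)).toWord = A ++ p ++ invRev q ++ B := by
  obtain ⟨c, a, b, p, q, hab, rfl, rfl⟩ := List.exists_eq_append_cons_of_not_suffix huv hvu
  refine ⟨p ++ [a], q ++ [b], by simp, ⟨c, by simp⟩, ?_⟩
  have hcancel : mk (A ++ (p ++ a :: c) ++ invRev (q ++ b :: c) ++ B) =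
      mk (A ++ (p ++ [a]) ++ invRev (q ++ [b]) ++ B) := by
    simp only [show p ++ a :: c = p ++ [a] ++ c by simp, show q ++ b :: c = q ++ [b] ++ c by simp,
      invRev_append, ← mul_mk, ← inv_mk]
    group
  have hAp : IsReduced (A ++ (p ++ [a])) := hAu.infix ⟨[], c, by simp⟩
  have hqB : IsReduced (invRev (q ++ [b]) ++ B) := hvB.infix ⟨invRev c, [], by
    simp only [List.append_nil, show q ++ b :: c = q ++ [b] ++ c by simp, invRev_append,
      List.append_assoc]⟩
  have hred : IsReduced ((A ++ (p ++ [a])) ++ (invRev (q ++ [b]) ++ B)) := by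
    refine List.isChain_append.2 ⟨hAp, hqB, ?_⟩
    intro x hx y hy h1
    simp only [← List.append_assoc, List.getLast?_concat, Option.mem_def,
      Option.some.injEq] at hx
    simp only [invRev_append_singleton, List.cons_append, List.head?_cons, Option.mem_def,
      Option.some.injEq] at hy
    subst hx hy
    by_contra h2
    exact hab (Prod.ext h1 (by revert h2; cases a.2 <;> cases b.2 <;> simp))
  rw [hcancel, IsReduced.toWord_mk]
  simpa only [List.append_assoc] using hred

theorem isReduced_cons_toWord {x : FreeGroup α} {l : α × Bool}
    (hx : ∀ p ∈ x.toWord.head?, p.1 ≠ l.1) : IsReduced (l :: x.toWord) :=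
  List.isChain_cons.2 ⟨fun p hp h => absurd h.symm (hx p hp), isReduced_toWord⟩

theorem isReduced_invRev_toWord_append_cons {x : FreeGroup α} {l : α × Bool}
    (hx : ∀ p ∈ x.toWord.head?, p.1 ≠ l.1) : IsReduced (invRev x.toWord ++ l :: x.toWord) := by
  have hinv : IsReduced (invRev x.toWord ++ [l]) := by
    simpa [invRev_cons, invRev] using (isReduced_cons_toWord (l := (l.1, !l.2)) hx).invRev
  simpa using
    hinv.append_overlap (L₃ := x.toWord) (isReduced_cons_toWord hx) (List.cons_ne_nil l [])

end FreeGroup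

namespace LoopBraidGroups

open FreeGroup hiding map_one map_mul map_inv

variable {α : Type*}

def IsBasisConjugating (β : MulAut (FreeGroup α)) (w : α → FreeGroup α) : Prop :=
  ∀ i, β (of i) = (w i)⁻¹ * of i * w i

namespace IsBasisConjugating

variable {β δ : MulAut (FreeGroup α)} {w : α → FreeGroup α}

theorem eq_one (hβ : IsBasisConjugating β 1) : β = 1 :=
  mulEquiv_ext fun a => by simp [hβ a]

theorem apply_mk_singleton (hβ : IsBasisConjugating β w) (l : α × Bool) :
    β (mk [l]) = (w l.1)⁻¹ * mk [l] * w l.1 := by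
  obtain ⟨i, _ | _⟩ := l
  · rw [mk_singleton_false, map_inv, hβ i]
    group
  · exact hβ i

variable [DecidableEq α]

theorem update_of_commute (hβ : IsBasisConjugating β w) {i : α} {c u : FreeGroup α}
    (hc : Commute c (of i)) (hw : w i = c * u) :
    IsBasisConjugating β (Function.update w i u) := by
  intro m
  rcases eq_or_ne m i with rfl | hm
  · rw [hβ m, hw, Function.update_self, mul_inv_rev, mul_assoc, mul_assoc, ← mul_assoc (of m),
      ← hc.eq]
    group
  · rw [hβ m, Function.update_of_ne hm]

theorem mul_mulSingle (hβ : IsBasisConjugating β w) {k : α} {g : FreeGroup α}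
    (hδ : IsBasisConjugating δ (Pi.mulSingle k g)) :
    IsBasisConjugating (β * δ) (Function.update w k (w k * β g)) := by
  intro m
  rw [MulAut.mul_apply, hδ m]
  rcases eq_or_ne m k with rfl | hm
  · rw [Pi.mulSingle_eq_same, Function.update_self, map_mul, map_mul, map_inv, hβ m]
    group
  · rw [Pi.mulSingle_eq_of_ne hm, Function.update_of_ne hm, inv_one, one_mul, mul_one, hβ m]

theorem inv_mulSingle {i k : α} (hδ : IsBasisConjugating δ (Pi.mulSingle k (of i)))
    (hik : i ≠ k) : IsBasisConjugating δ⁻¹ (Pi.mulSingle k (of i)⁻¹) := by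
  intro m
  rw [MulAut.inv_apply, MulEquiv.symm_apply_eq]
  rcases eq_or_ne m k with rfl | hm
  · have hi : δ (of i) = of i := by simpa [Pi.mulSingle_eq_of_ne hik] using hδ i
    simp only [Pi.mulSingle_eq_same, map_mul, map_inv, inv_inv, hi, hδ m]
    group
  · rw [Pi.mulSingle_eq_of_ne hm, inv_one, one_mul, mul_one, hδ m, Pi.mulSingle_eq_of_ne hm]
    group

/-- Nielsen cancellation: under `hhead` and `hsuffix`, the middle letter of the image
`(w l)⁻¹ l (w l)` of the last letter `l` of a reduced word survives free reduction. -/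
theorem cons_suffix_toWord_apply_mk (hβ : IsBasisConjugating β w)
    (hhead : ∀ i, ∀ p ∈ (w i).toWord.head?, p.1 ≠ i)
    (hsuffix : ∀ i k s, ¬ (i, s) :: (w i).toWord <:+ (w k).toWord) :
    ∀ (L : List (α × Bool)) (l : α × Bool), IsReduced (L ++ [l]) →
      l :: (w l.1).toWord <:+ (β (mk (L ++ [l]))).toWord := by
  intro L
  induction L using List.reverseRecOn with
  | nil =>
    intro l _
    have himage : β (mk [l]) = mk (invRev (w l.1).toWord ++ l :: (w l.1).toWord) := by
      rw [hβ.apply_mk_singleton, ← mk_toWord (x := w l.1), inv_mk, mul_mk, mul_mk, toWord_mk,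
        reduce_toWord]
      simp
    rw [List.nil_append, himage, (isReduced_invRev_toWord_append_cons (hhead l.1)).toWord_mk]
    exact List.suffix_append _ _
  | append_singleton L l' ih =>
    intro l hL
    obtain ⟨A, hA⟩ := ih l' (hL.infix ⟨[], [l], rfl⟩)
    have hl' : l' ≠ (l.1, !l.2) := by
      rintro rfl
      have := List.isChain_cons_cons.1 (hL.infix ⟨L, [], by simp⟩ : IsReduced [(l.1, !l.2), l])
      simp at this
    have himage : β (mk (L ++ [l'] ++ [l])) = mk (A ++ l' :: (w l'.1).toWord ++
        invRev ((l.1, !l.2) :: (w l.1).toWord) ++ (w l.1).toWord) := by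
      rw [← mul_mk, map_mul, hβ.apply_mk_singleton, ← mk_toWord (x := β (mk (L ++ [l']))), ← hA,
        show invRev ((l.1, !l.2) :: (w l.1).toWord) = invRev (w l.1).toWord ++ [l] by
          simp [invRev]]
      simp only [← mul_mk, ← inv_mk, mk_toWord]
      group
    obtain ⟨p, q, hq, hqv, htoWord⟩ := exists_toWord_mk_append_invRev_append
      (u := l' :: (w l'.1).toWord) (v := (l.1, !l.2) :: (w l.1).toWord)
      (by rw [hA]; exact isReduced_toWord)
      (by simpa [invRev] using isReduced_invRev_toWord_append_cons (hhead l.1))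
      (fun h => (List.suffix_cons_iff.1 h).elim (fun h' => hl' (List.cons_eq_cons.1 h').1)
        (hsuffix l'.1 l.1 l'.2))
      (fun h => (List.suffix_cons_iff.1 h).elim (fun h' => hl' (List.cons_eq_cons.1 h').1.symm)
        (hsuffix l.1 l'.1 (!l.2)))
    obtain ⟨q', rfl, -⟩ := (List.prefix_cons_iff.1 hqv).resolve_left hq
    rw [himage, htoWord]
    exact ⟨A ++ p ++ invRev q', by simp [invRev]⟩

theorem exists_reduction (hβ : IsBasisConjugating β w) (hw : w ≠ 1) :
    (∃ i, ∃ p ∈ (w i).toWord.head?, p.1 = i) ∨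
      ∃ i k s, (i, s) :: (w i).toWord <:+ (w k).toWord := by
  by_contra! h
  obtain ⟨hhead, hsuffix⟩ := h
  obtain ⟨j, hj⟩ := Function.ne_iff.1 hw
  have hne : (β.symm (of j)).toWord ≠ [] := by simp
  obtain ⟨L, l, hLl⟩ := List.eq_nil_or_concat' _ |>.resolve_left hne
  have h := hβ.cons_suffix_toWord_apply_mk hhead hsuffix L l (hLl ▸ isReduced_toWord)
  rw [← hLl, mk_toWord, MulEquiv.apply_symm_apply, toWord_of, List.suffix_cons_iff] at h
  rcases h with h | h
  · obtain ⟨rfl, hw⟩ := List.cons_eq_cons.1 h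
    exact hj (toWord_eq_nil_iff.1 hw)
  · simp at h

theorem update_tail (hβ : IsBasisConjugating β w) {i : α} {p : α × Bool}
    (hp : p ∈ (w i).toWord.head?) (hpi : p.1 = i) :
    IsBasisConjugating β (Function.update w i (mk (w i).toWord.tail)) := by
  refine hβ.update_of_commute (c := mk [p]) ?_ ?_
  · obtain ⟨_, _ | _⟩ := p <;> subst hpi
    · rw [mk_singleton_false]
      exact (Commute.refl _).inv_left
    · exact Commute.refl _
  · rw [mul_mk, List.singleton_append, ← List.eq_cons_of_mem_head? hp, mk_toWord]

theorem exists_mem_mul_update_of_suffix {H : Subgroup (MulAut (FreeGroup α))}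
    (hH : ∀ i k, i ≠ k → ∃ δ ∈ H, IsBasisConjugating δ (Pi.mulSingle k (of i)))
    (hβ : IsBasisConjugating β w) {i k : α} {s : Bool} {b : List (α × Bool)}
    (hb : b ++ (i, s) :: (w i).toWord = (w k).toWord) :
    ∃ δ ∈ H, IsBasisConjugating (β * δ) (Function.update w k (mk b * w i)) := by
  have hik : i ≠ k := by
    rintro rfl
    have := congrArg List.length hb
    simp at this
    omega
  obtain ⟨δ, hδH, hδ⟩ : ∃ δ ∈ H, IsBasisConjugating δ (Pi.mulSingle k (mk [(i, !s)])) := by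
    obtain ⟨δ, hδH, hδ⟩ := hH i k hik
    cases s
    · exact ⟨δ, hδH, hδ⟩
    · exact ⟨δ⁻¹, H.inv_mem hδH, by simpa [mk_singleton_false] using hδ.inv_mulSingle hik⟩
  have hwk : w k * β (mk [(i, !s)]) = mk b * w i := by
    rw [hβ.apply_mk_singleton, ← mk_toWord (x := w k), ← hb, ← mul_mk, ← List.singleton_append,
      ← mul_mk, mk_toWord, show mk [(i, !s)] = (mk [(i, s)])⁻¹ by simp [inv_mk, invRev]]
    group
  exact ⟨δ, hδH, hwk ▸ hβ.mul_mulSingle hδ⟩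

end IsBasisConjugating

section Descent

variable [DecidableEq α] [Fintype α]

theorem sum_norm_update_lt {w : α → FreeGroup α} {i : α} {x : FreeGroup α}
    (h : x.norm < (w i).norm) : ∑ m, (Function.update w i x m).norm < ∑ m, (w m).norm := by
  refine Finset.sum_lt_sum (fun m _ => ?_) ⟨i, Finset.mem_univ i, by simpa using h⟩
  rcases eq_or_ne m i with rfl | hm
  · simpa using h.le
  · simp [Function.update_of_ne hm]

theorem mem_of_isBasisConjugating {H : Subgroup (MulAut (FreeGroup α))}
    (hH : ∀ i k, i ≠ k → ∃ δ ∈ H, IsBasisConjugating δ (Pi.mulSingle k (of i)))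
    {β : MulAut (FreeGroup α)} {w : α → FreeGroup α} (hβ : IsBasisConjugating β w) : β ∈ H := by
  induction hN : ∑ m, (w m).norm using Nat.strong_induction_on generalizing β w with
  | _ N ih =>
  subst hN
  rcases eq_or_ne w 1 with rfl | hw
  · rw [hβ.eq_one]
    exact H.one_mem
  rcases hβ.exists_reduction hw with ⟨i, p, hp, hpi⟩ | ⟨i, k, s, b, hb⟩
  · have hlt : (mk (w i).toWord.tail).norm < (w i).norm := norm_mk_le.trans_lt <| by
      simp [FreeGroup.norm, List.length_pos_of_mem (List.mem_of_mem_head? hp)]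
    exact ih _ (sum_norm_update_lt hlt) (hβ.update_tail hp hpi) rfl
  · obtain ⟨δ, hδH, hβδ⟩ := hβ.exists_mem_mul_update_of_suffix hH hb
    have hlt : (mk b * w i).norm < (w k).norm := calc
      (mk b * w i).norm ≤ b.length + (w i).norm :=
        (FreeGroup.norm_mul_le _ _).trans (by simp [norm_mk_le])
      _ < (w k).norm := by simp [FreeGroup.norm, ← hb]
    simpa using H.mul_mem (ih _ (sum_norm_update_lt hlt) hβδ rfl) (H.inv_mem hδH)

end Descent

section Permutations

def permAut : Equiv.Perm α →* MulAut (FreeGroup α) where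
  toFun π := freeGroupCongr π
  map_one' := freeGroupCongr_refl
  map_mul' π τ := (freeGroupCongr_trans τ π).symm

@[simp] theorem permAut_apply_of (π : Equiv.Perm α) (a : α) : permAut π (of a) = of (π a) := by
  simp [permAut]

variable [DecidableEq α]

theorem IsBasisConjugating.permAut_mul_mul_inv {δ : MulAut (FreeGroup α)} {i k : α}
    (hδ : IsBasisConjugating δ (Pi.mulSingle k (of i))) (π : Equiv.Perm α) :
    IsBasisConjugating (permAut π * δ * (permAut π)⁻¹) (Pi.mulSingle (π k) (of (π i))) := by
  intro m
  rw [MulAut.mul_apply, MulAut.mul_apply, ← map_inv, permAut_apply_of, hδ]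
  by_cases hm : m = π k
  · subst hm
    simp
  · have hm' : π.symm m ≠ k := fun h => hm (by rw [← h, Equiv.apply_symm_apply])
    simp [Pi.mulSingle_eq_of_ne hm, Pi.mulSingle_eq_of_ne hm']

theorem exists_mem_isBasisConjugating_mulSingle {H : Subgroup (MulAut (FreeGroup α))}
    (hperm : ∀ π, permAut π ∈ H) {δ : MulAut (FreeGroup α)} {a b : α} (hba : b ≠ a)
    (hδH : δ ∈ H) (hδ : IsBasisConjugating δ (Pi.mulSingle a (of b))) {i k : α} (hik : i ≠ k) :
    ∃ δ' ∈ H, IsBasisConjugating δ' (Pi.mulSingle k (of i)) := by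
  obtain ⟨π, rfl, rfl⟩ := Equiv.Perm.exists_apply_eq_apply_eq hba hik
  exact ⟨_, H.mul_mem (H.mul_mem (hperm π) hδH) (H.inv_mem (hperm π)), hδ.permAut_mul_mul_inv π⟩

end Permutations

section FreeGroupOfRank

variable {n : ℕ}

theorem xg_of_lt {i : ℕ} (h : i < n) : xg n i = of ⟨i, h⟩ := dif_pos h

theorem IsRho.eq_permAut_swap {i : ℕ} (h : i + 1 < n) {r : MulAut (FreeGroup (Fin n))}
    (hr : IsRho n i r) : r = permAut (Equiv.swap ⟨i, by omega⟩ ⟨i + 1, h⟩) := by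
  obtain ⟨h1, h2, h3⟩ := hr
  refine mulEquiv_ext fun ⟨m, hm⟩ => ?_
  rw [permAut_apply_of, ← xg_of_lt hm]
  by_cases hmi : m = i
  · subst hmi
    rw [Equiv.swap_apply_left, h1, xg_of_lt h]
  by_cases hmi' : m = i + 1
  · subst hmi'
    rw [Equiv.swap_apply_right, h2, xg_of_lt]
  rw [Equiv.swap_apply_of_ne_of_ne (by simpa [Fin.ext_iff]) (by simpa [Fin.ext_iff]),
    h3 m hm hmi hmi', xg_of_lt hm]

theorem isBasisConjugating_rho_mul_sigma {i : ℕ} (h : i + 1 < n)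
    {s r : MulAut (FreeGroup (Fin n))} (hs : IsSigma n i s) (hr : IsRho n i r) :
    IsBasisConjugating (r * s) (Pi.mulSingle ⟨i + 1, h⟩ (of ⟨i, by omega⟩)) := by
  obtain ⟨hs1, hs2, hs3⟩ := hs
  obtain ⟨hr1, hr2, hr3⟩ := hr
  rintro ⟨m, hm⟩
  rw [MulAut.mul_apply, ← xg_of_lt hm]
  by_cases hmi : m = i
  · subst hmi
    rw [hs1, hr2, Pi.mulSingle_eq_of_ne (by simp [Fin.ext_iff]), xg_of_lt hm]
    group
  by_cases hmi' : m = i + 1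
  · subst hmi'
    rw [hs2, map_mul, map_mul, map_inv, hr1, hr2, Pi.mulSingle_eq_same, xg_of_lt hm,
      xg_of_lt (Nat.lt_of_succ_lt hm)]
  rw [hs3 m hm hmi hmi', hr3 m hm hmi hmi', Pi.mulSingle_eq_of_ne (by simpa [Fin.ext_iff]),
    xg_of_lt hm]
  group

theorem permAut_mem_of_forall_swap_mem {H : Subgroup (MulAut (FreeGroup (Fin n)))}
    (hH : ∀ i (h : i + 1 < n), permAut (Equiv.swap ⟨i, by omega⟩ ⟨i + 1, h⟩) ∈ H)
    (π : Equiv.Perm (Fin n)) : permAut π ∈ H := by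
  cases n with
  | zero =>
    rw [Subsingleton.elim π 1, map_one]
    exact H.one_mem
  | succ m =>
    have hle : Submonoid.closure (Set.range fun i : Fin m => Equiv.swap i.castSucc i.succ) ≤
        (H.comap permAut).toSubmonoid :=
      Submonoid.closure_le.2 (by rintro _ ⟨i, rfl⟩; exact hH i (by omega))
    exact hle (by simp [Equiv.Perm.mclosure_swap_castSucc_succ])

def pcSubgroup (n : ℕ) : Subgroup (MulAut (FreeGroup (Fin n))) where
  carrier := PCSet n
  one_mem' := ⟨1, 1, fun i => by simp⟩
  mul_mem' := by
    rintro f g ⟨π, w, hw⟩ ⟨τ, v, hv⟩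
    refine ⟨π * τ, fun i => w (τ i) * f (v i), fun i => ?_⟩
    rw [MulAut.mul_apply, hv i, map_mul, map_mul, map_inv, hw (τ i), Equiv.Perm.mul_apply]
    group
  inv_mem' := by
    rintro f ⟨π, w, hw⟩
    refine ⟨π⁻¹, fun j => (f⁻¹ (w (π⁻¹ j)))⁻¹, fun j => f.injective ?_⟩
    simp only [MulAut.inv_apply, MulEquiv.apply_symm_apply, Equiv.Perm.coe_inv, inv_inv, map_mul,
      map_inv, hw, Equiv.apply_symm_apply]
    group

theorem permAut_mem_pcSet (π : Equiv.Perm (Fin n)) : permAut π ∈ PCSet n :=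
  ⟨π, 1, fun i => by simp⟩

theorem IsBasisConjugating.mem_pcSet {β : MulAut (FreeGroup (Fin n))}
    {w : Fin n → FreeGroup (Fin n)} (hβ : IsBasisConjugating β w) : β ∈ PCSet n :=
  ⟨1, w, hβ⟩

theorem exists_eq_permAut_mul_of_mem_pcSet {f : MulAut (FreeGroup (Fin n))} (hf : f ∈ PCSet n) :
    ∃ π β w, IsBasisConjugating β w ∧ f = permAut π * β := by
  obtain ⟨π, w, hw⟩ := hf
  refine ⟨π, (permAut π)⁻¹ * f, fun j => (permAut π)⁻¹ (w j), fun j => ?_,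
    (mul_inv_cancel_left _ _).symm⟩
  rw [MulAut.mul_apply, hw j, map_mul, map_mul, map_inv, ← map_inv permAut π, permAut_apply_of]
  simp

end FreeGroupOfRank

theorem pc_eq_closure_sigma_rho_general (n : ℕ)
    (σ ρ : ℕ → MulAut (FreeGroup (Fin n)))
    (hσ : ∀ i, i + 1 < n → IsSigma n i (σ i))
    (hρ : ∀ i, i + 1 < n → IsRho n i (ρ i)) :
    PCSet n =
      ↑(Subgroup.closure
          ({g | ∃ i, i + 1 < n ∧ g = σ i} ∪ {g | ∃ i, i + 1 < n ∧ g = ρ i})) := by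
  set H := Subgroup.closure
    ({g | ∃ i, i + 1 < n ∧ g = σ i} ∪ {g | ∃ i, i + 1 < n ∧ g = ρ i})
  have hσH : ∀ i, i + 1 < n → σ i ∈ H := fun i h => Subgroup.subset_closure (Or.inl ⟨i, h, rfl⟩)
  have hρH : ∀ i, i + 1 < n → ρ i ∈ H := fun i h => Subgroup.subset_closure (Or.inr ⟨i, h, rfl⟩)
  have hperm : ∀ π, permAut π ∈ H :=
    permAut_mem_of_forall_swap_mem fun i h => (hρ i h).eq_permAut_swap h ▸ hρH i h
  have helem : ∀ i k : Fin n, i ≠ k → ∃ δ ∈ H, IsBasisConjugating δ (Pi.mulSingle k (of i)) := by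
    intro i k hik
    have h : 0 + 1 < n := by have := Fin.val_ne_of_ne hik; omega
    exact exists_mem_isBasisConjugating_mulSingle hperm (by simp [Fin.ext_iff])
      (H.mul_mem (hρH 0 h) (hσH 0 h)) (isBasisConjugating_rho_mul_sigma h (hσ 0 h) (hρ 0 h)) hik
  refine subset_antisymm (fun f hf => ?_) ((Subgroup.closure_le (pcSubgroup n)).2 ?_)
  · obtain ⟨π, β, w, hβ, rfl⟩ := exists_eq_permAut_mul_of_mem_pcSet hf
    exact H.mul_mem (hperm π) (mem_of_isBasisConjugating helem hβ)
  · have hρ_mem : ∀ i, i + 1 < n → ρ i ∈ pcSubgroup n := fun i h =>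
      (hρ i h).eq_permAut_swap h ▸ permAut_mem_pcSet _
    rintro _ (⟨i, h, rfl⟩ | ⟨i, h, rfl⟩)
    · rw [← inv_mul_cancel_left (ρ i) (σ i)]
      exact (pcSubgroup n).mul_mem ((pcSubgroup n).inv_mem (hρ_mem i h))
        (isBasisConjugating_rho_mul_sigma h (hσ i h) (hρ i h)).mem_pcSet
    · exact hρ_mem i h

/-- For `n ≥ 1`, the set `PC_n` of permutation-conjugacy automorphisms
is a subgroup of `Aut(F_n)`, namely it coincides with the subgroup generated by
`σ_1, …, σ_{n-1}, ρ_1, …, ρ_{n-1}` (indices `0`-based here). -/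
theorem pc_eq_closure_sigma_rho (n : ℕ) (hn : 1 ≤ n)
    (σ ρ : ℕ → MulAut (FreeGroup (Fin n)))
    (hσ : ∀ i, i + 1 < n → IsSigma n i (σ i))
    (hρ : ∀ i, i + 1 < n → IsRho n i (ρ i)) :
    PCSet n =
      ↑(Subgroup.closure
          ({g | ∃ i, i + 1 < n ∧ g = σ i} ∪ {g | ∃ i, i + 1 < n ∧ g = ρ i})) :=
  pc_eq_closure_sigma_rho_general n σ ρ hσ hρ

end LoopBraidGroups
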